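/- Let R_d > 0, C > 0, R_p ≥ 0, q0 be real constants, and set ω = 1/(2·R_d·C). Define Q(t) = q0·sin²(ωt) and define the outlet pressure p : ℝ → ℝ by p(t) = R_d·q0·[ (R_p/R_d + 1/2)·sin²(ωt) + (1/4)·(1 − exp(−2ωt) − sin(2ωt)) ]. Then p(t) = R_p·Q(t) + p_d(t) for all t, where p_d(t) = (R_d·q0/4)·(2 − cos(2ωt) − sin(2ωt) − exp(−2ωt)); consequently p is differentiable, p(0) = 0, and p satisfies the three-element Windkessel relation C·p'(t) + p(t)/R_d = (1 + R_p/R_d)·Q(t) + C·R_p·Q'(t) for all t ∈ ℝ. -/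

import Mathlib

/-!
The distal pressure `p_d` is the periodic response to `Q = q0·sin²(ωt) = (q0/2)(1 − cos 2ωt)` plus
the transient `exp(−t/(R_d C)) = exp(−2ωt)` that makes `p_d(0) = 0`; the choice `2ωR_dC = 1` makes
the coefficients of the periodic part come out as `2`, `−1`, `−1`. Since `cos 2θ = 1 − 2 sin²θ`, the
given `p` equals `R_p·Q + p_d`, and any such sum satisfies the three-element relation once `p_d`
satisfies the two-element one.
-/

open Real

theorem windkessel_three_element_of_two_element {R_p R_d C : ℝ} {Q p_d p : ℝ → ℝ} {t : ℝ}
    (hQ : DifferentiableAt ℝ Q t) (hpd : DifferentiableAt ℝ p_d t)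
    (hdistal : C * deriv p_d t + p_d t / R_d = Q t) (hp : ∀ s, p s = R_p * Q s + p_d s) :
    C * deriv p t + p t / R_d = (1 + R_p / R_d) * Q t + C * R_p * deriv Q t := by
  have hp_fun : p = fun s => R_p * Q s + p_d s := funext hp
  have hderiv : deriv p t = R_p * deriv Q t + deriv p_d t := by
    rw [hp_fun, deriv_fun_add (hQ.const_mul R_p) hpd, deriv_const_mul _ hQ]
  rw [hderiv, hp, ← hdistal]
  ring

theorem hasDerivAt_distal_pressure (R_d q0 ω t : ℝ) :
    HasDerivAt
      (fun s => (R_d * q0 / 4) *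
        (2 - cos (2 * ω * s) - sin (2 * ω * s) - exp (-(2 * ω * s))))
      ((R_d * q0 / 4) * (2 * ω) *
        (sin (2 * ω * t) - cos (2 * ω * t) + exp (-(2 * ω * t)))) t := by
  have hlin : HasDerivAt (fun s => 2 * ω * s) (2 * ω) t := by
    simpa using (hasDerivAt_id t).const_mul (2 * ω)
  have h := ((((hasDerivAt_const t (2 : ℝ)).fun_sub hlin.cos).fun_sub hlin.sin).fun_sub
    hlin.fun_neg.exp).const_mul (R_d * q0 / 4)
  exact h.congr_deriv (by ring)

theorem distal_pressure_windkessel {R_d C q0 ω : ℝ} (hωRC : 2 * ω * R_d * C = 1) (t : ℝ) :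
    C * deriv (fun s => (R_d * q0 / 4) *
        (2 - cos (2 * ω * s) - sin (2 * ω * s) - exp (-(2 * ω * s)))) t
      + (R_d * q0 / 4) * (2 - cos (2 * ω * t) - sin (2 * ω * t) - exp (-(2 * ω * t))) / R_d
      = q0 * sin (ω * t) ^ 2 := by
  have hRd : R_d ≠ 0 := by rintro rfl; simp at hωRC
  have hcos : cos (2 * ω * t) = 1 - 2 * sin (ω * t) ^ 2 := by
    rw [mul_assoc, cos_two_mul_eq_one_sub]
  rw [(hasDerivAt_distal_pressure R_d q0 ω t).deriv, hcos]
  field_simp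
  linear_combination (q0 * (sin (2 * ω * t) - (1 - 2 * sin (ω * t) ^ 2) + exp (-(2 * ω * t))))
    * hωRC

theorem outlet_pressure_eq_add_distal {R_d : ℝ} (hRd : R_d ≠ 0) (R_p q0 θ e : ℝ) :
    R_d * q0 * ((R_p / R_d + 1 / 2) * sin θ ^ 2 + (1 / 4) * (1 - e - sin (2 * θ)))
      = R_p * (q0 * sin θ ^ 2) + (R_d * q0 / 4) * (2 - cos (2 * θ) - sin (2 * θ) - e) := by
  rw [cos_two_mul_eq_one_sub]
  field_simp
  ring

theorem windkessel_three_element_solution_general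
    (R_d C R_p q0 : ℝ) (hRd : 0 < R_d) (hC : 0 < C)
    (ω : ℝ) (hω : ω = 1 / (2 * R_d * C))
    (Q : ℝ → ℝ) (hQ : ∀ t, Q t = q0 * Real.sin (ω * t) ^ 2)
    (p_d : ℝ → ℝ)
    (hpd : ∀ t, p_d t = (R_d * q0 / 4) *
      (2 - Real.cos (2 * ω * t) - Real.sin (2 * ω * t) - Real.exp (-(2 * ω * t))))
    (p : ℝ → ℝ)
    (hp : ∀ t, p t = R_d * q0 *
      ((R_p / R_d + 1 / 2) * Real.sin (ω * t) ^ 2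
        + (1 / 4) * (1 - Real.exp (-(2 * ω * t)) - Real.sin (2 * ω * t)))) :
    (∀ t : ℝ, p t = R_p * Q t + p_d t) ∧
      Differentiable ℝ p ∧
      p 0 = 0 ∧
      (∀ t : ℝ, C * deriv p t + p t / R_d
        = (1 + R_p / R_d) * Q t + C * R_p * deriv Q t) := by
  have hωRC : 2 * ω * R_d * C = 1 := by rw [hω]; field_simp
  have hQ_fun : Q = fun t => q0 * sin (ω * t) ^ 2 := funext hQ
  have hpd_fun : p_d = fun t => (R_d * q0 / 4) *
      (2 - cos (2 * ω * t) - sin (2 * ω * t) - exp (-(2 * ω * t))) := funext hpd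
  have hdecomp : ∀ t, p t = R_p * Q t + p_d t := fun t => by
    rw [hp, hQ, hpd, mul_assoc 2 ω t]
    exact outlet_pressure_eq_add_distal hRd.ne' R_p q0 (ω * t) _
  refine ⟨hdecomp, by rw [funext hp]; fun_prop, by simp [hp], fun t => ?_⟩
  refine windkessel_three_element_of_two_element (by rw [hQ_fun]; fun_prop)
    (by rw [hpd_fun]; fun_prop) ?_ hdecomp
  rw [hpd_fun, hQ]
  exact distal_pressure_windkessel hωRC t

/-- Three-element Windkessel model with `ω = 1/(2·R_d·C)` and inflow
`Q(t) = q0·sin²(ωt)`: the outlet pressure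
`p(t) = R_d·q0·[(R_p/R_d + 1/2)·sin²(ωt) + (1/4)·(1 − exp(−2ωt) − sin(2ωt))]`
decomposes as `p = R_p·Q + p_d` with
`p_d(t) = (R_d·q0/4)·(2 − cos(2ωt) − sin(2ωt) − exp(−2ωt))`; consequently `p` is
differentiable, `p(0) = 0`, and `p` satisfies the three-element Windkessel relation
`C·p' + p/R_d = (1 + R_p/R_d)·Q + C·R_p·Q'`. -/
theorem windkessel_three_element_solution
    (R_d C R_p q0 : ℝ) (hRd : 0 < R_d) (hC : 0 < C) (hRp : 0 ≤ R_p)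
    (ω : ℝ) (hω : ω = 1 / (2 * R_d * C))
    (Q : ℝ → ℝ) (hQ : ∀ t, Q t = q0 * Real.sin (ω * t) ^ 2)
    (p_d : ℝ → ℝ)
    (hpd : ∀ t, p_d t = (R_d * q0 / 4) *
      (2 - Real.cos (2 * ω * t) - Real.sin (2 * ω * t) - Real.exp (-(2 * ω * t))))
    (p : ℝ → ℝ)
    (hp : ∀ t, p t = R_d * q0 *
      ((R_p / R_d + 1 / 2) * Real.sin (ω * t) ^ 2
        + (1 / 4) * (1 - Real.exp (-(2 * ω * t)) - Real.sin (2 * ω * t)))) :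
    (∀ t : ℝ, p t = R_p * Q t + p_d t) ∧
      Differentiable ℝ p ∧
      p 0 = 0 ∧
      (∀ t : ℝ, C * deriv p t + p t / R_d
        = (1 + R_p / R_d) * Q t + C * R_p * deriv Q t) :=
  windkessel_three_element_solution_general R_d C R_p q0 hRd hC ω hω Q hQ p_d hpd p hp
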